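/- Let X, Y be C³ vector fields on ℝⁿ. For a C¹ field T of symmetric bilinear maps ℝⁿ × ℝⁿ → ℝⁿ, define its Lie derivative along X by (L_X T)(x)(u,v) = (DT(x)(X(x)))(u,v) − DX(x)( T(x)(u,v) ) + T(x)( DX(x)u, v ) + T(x)( u, DX(x)v ). Then for all x, u, v: D²([X,Y])(x)(u,v) = (L_X (D²Y))(x)(u,v) − (L_Y (D²X))(x)(u,v), where [X,Y](x) = DY(x)(X(x)) − DX(x)(Y(x)). That is, the map X ↦ D²X is a 1-cocycle on the Lie algebra Vect(ℝⁿ) with values in symmetric (2,1)-tensor fields. -/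

import Mathlib

/-!
By the product rule, `D²(DW · V)(u, v) = D³W(V, u, v) + D²W(DV u, v) + D²W(u, DV v) + DW(D²V(u, v))`,
where the symmetry of `D²W` and `D³W` (for a `C³` field `W`) puts `V` in the first slot.
Since `[V, W] = DW · V − DV · W`, the first three terms are `L_V(D²W)` without its term
`−DV(D²W(u, v))`, and that term is supplied by the last term of the expansion of `DV · W`.
-/

/-- The Lie derivative along the vector field `X` of a field `T` of symmetric bilinear
maps (a (2,1)-tensor field):
`(L_X T)(x)(u,v) = DT(x)(X(x))(u,v) − DX(x)(T(x)(u,v)) + T(x)(DX(x)u, v) + T(x)(u, DX(x)v)`. -/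
noncomputable def lieDerivTensor (n : ℕ) (X : (Fin n → ℝ) → (Fin n → ℝ))
    (T : (Fin n → ℝ) → ((Fin n → ℝ) →L[ℝ] (Fin n → ℝ) →L[ℝ] (Fin n → ℝ)))
    (x u v : Fin n → ℝ) : Fin n → ℝ :=
  (fderiv ℝ T x (X x)) u v - fderiv ℝ X x (T x u v)
    + T x (fderiv ℝ X x u) v + T x u (fderiv ℝ X x v)

open ContinuousLinearMap VectorField

section
variable {E F : Type*} [NormedAddCommGroup E] [NormedSpace ℝ E]
  [NormedAddCommGroup F] [NormedSpace ℝ F]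

theorem fderiv_fderiv_apply_comp {f : E → F} {g : E → E} {x : E}
    (hf : ContDiffAt ℝ 2 f x) (hg : DifferentiableAt ℝ g x) :
    fderiv ℝ (fun z => fderiv ℝ f z (g z)) x
      = fderiv ℝ (fderiv ℝ f) x (g x) + (fderiv ℝ f x).comp (fderiv ℝ g x) := by
  have hf' : DifferentiableAt ℝ (fderiv ℝ f) x :=
    (hf.fderiv_right (m := 1) le_rfl).differentiableAt one_ne_zero
  ext w
  simp [fderiv_clm_apply hf' hg, (hf.isSymmSndFDerivAt (by simp)).eq, add_comm]

theorem fderiv_fderiv_fderiv_apply_comp {f : E → F} {g : E → E}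
    (hf : ContDiff ℝ 3 f) (hg : ContDiff ℝ 2 g) (x u v : E) :
    fderiv ℝ (fderiv ℝ (fun z => fderiv ℝ f z (g z))) x u v
      = fderiv ℝ (fderiv ℝ (fderiv ℝ f)) x (g x) u v
        + fderiv ℝ (fderiv ℝ f) x (fderiv ℝ g x u) v
        + fderiv ℝ (fderiv ℝ f) x u (fderiv ℝ g x v)
        + fderiv ℝ f x (fderiv ℝ (fderiv ℝ g) x u v) := by
  have hg1 : Differentiable ℝ g := hg.differentiable two_ne_zero
  have hDf : ContDiff ℝ 2 (fderiv ℝ f) := hf.fderiv_right (by norm_num)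
  have hDf1 : Differentiable ℝ (fderiv ℝ f) := hDf.differentiable two_ne_zero
  have hD2f : Differentiable ℝ (fderiv ℝ (fderiv ℝ f)) :=
    (hDf.fderiv_right (m := 1) (by norm_num)).differentiable one_ne_zero
  have hDg : Differentiable ℝ (fderiv ℝ g) :=
    (hg.fderiv_right (m := 1) (by norm_num)).differentiable one_ne_zero
  have hD : fderiv ℝ (fun z => fderiv ℝ f z (g z))
      = fun z => fderiv ℝ (fderiv ℝ f) z (g z) + (fderiv ℝ f z).comp (fderiv ℝ g z) :=
    funext fun z => fderiv_fderiv_apply_comp (hf.of_le (by norm_num)).contDiffAt (hg1 z)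
  rw [hD, fderiv_fun_add ((hD2f x).clm_apply (hg1 x)) ((hDf1 x).clm_comp (hDg x)),
    fderiv_clm_apply (hD2f x) (hg1 x), fderiv_clm_comp (hDf1 x) (hDg x)]
  simp only [add_apply, comp_apply, flip_apply, compL_apply,
    (hDf.contDiffAt.isSymmSndFDerivAt (by simp)).eq u (g x)]
  abel

theorem fderiv_fderiv_sub {f g : E → F} (hf : ContDiff ℝ 2 f) (hg : ContDiff ℝ 2 g) (x : E) :
    fderiv ℝ (fderiv ℝ (fun z => f z - g z)) x
      = fderiv ℝ (fderiv ℝ f) x - fderiv ℝ (fderiv ℝ g) x := by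
  have hD : fderiv ℝ (fun z => f z - g z) = fun z => fderiv ℝ f z - fderiv ℝ g z :=
    funext fun z =>
      fderiv_fun_sub (hf.differentiable two_ne_zero z) (hg.differentiable two_ne_zero z)
  rw [hD, fderiv_fun_sub]
  · exact (hf.fderiv_right (m := 1) (by norm_num)).differentiable one_ne_zero x
  · exact (hg.fderiv_right (m := 1) (by norm_num)).differentiable one_ne_zero x

theorem fderiv_fderiv_lieBracket {V W : E → E} (hV : ContDiff ℝ 3 V) (hW : ContDiff ℝ 3 W)
    (x u v : E) :
    fderiv ℝ (fderiv ℝ (lieBracket ℝ V W)) x u v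
      = (fderiv ℝ (fderiv ℝ (fderiv ℝ W)) x (V x) u v
          + fderiv ℝ (fderiv ℝ W) x (fderiv ℝ V x u) v
          + fderiv ℝ (fderiv ℝ W) x u (fderiv ℝ V x v)
          + fderiv ℝ W x (fderiv ℝ (fderiv ℝ V) x u v))
        - (fderiv ℝ (fderiv ℝ (fderiv ℝ V)) x (W x) u v
          + fderiv ℝ (fderiv ℝ V) x (fderiv ℝ W x u) v
          + fderiv ℝ (fderiv ℝ V) x u (fderiv ℝ W x v)
          + fderiv ℝ V x (fderiv ℝ (fderiv ℝ W) x u v)) := by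
  have hWV : ContDiff ℝ 2 fun z => fderiv ℝ W z (V z) :=
    (hW.fderiv_right (by norm_num)).clm_apply (hV.of_le (by norm_num))
  have hVW : ContDiff ℝ 2 fun z => fderiv ℝ V z (W z) :=
    (hV.fderiv_right (by norm_num)).clm_apply (hW.of_le (by norm_num))
  rw [lieBracket_eq, fderiv_fderiv_sub hWV hVW, sub_apply, sub_apply,
    fderiv_fderiv_fderiv_apply_comp hW (hV.of_le (by norm_num)),
    fderiv_fderiv_fderiv_apply_comp hV (hW.of_le (by norm_num))]

end

/-- The map `X ↦ D²X` is a 1-cocycle on `Vect(ℝⁿ)` with values in symmetric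
(2,1)-tensor fields: `D²[X,Y] = L_X(D²Y) − L_Y(D²X)`. -/
theorem hessian_is_cocycle (n : ℕ)
    (X Y : (Fin n → ℝ) → (Fin n → ℝ))
    (hX : ContDiff ℝ 3 X) (hY : ContDiff ℝ 3 Y) :
    ∀ x u v : Fin n → ℝ,
      fderiv ℝ (fderiv ℝ (fun z => fderiv ℝ Y z (X z) - fderiv ℝ X z (Y z))) x u v
        = lieDerivTensor n X (fun z => fderiv ℝ (fderiv ℝ Y) z) x u v
          - lieDerivTensor n Y (fun z => fderiv ℝ (fderiv ℝ X) z) x u v := by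
  intro x u v
  rw [← lieBracket_eq, fderiv_fderiv_lieBracket hX hY]
  unfold lieDerivTensor
  abel
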